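/- Let k be a perfect field and f ∈ k[x] a monic irreducible polynomial of degree d, and let K = k[x]/(f). Then for every integer m ≥ 1 there exists a ring isomorphism k[x]/(f^m) ≅ K[u]/(u^m). -/

import Mathlib

/-!
Let `α` be the root of `f` in `K` and `u` the class of `X` in `S = K[u]/(u^m)`. As `f` is
separable, `f'(α) ≠ 0`, so the Taylor expansion `f(α + u) = f'(α) u + c u²` exhibits `f(α + u)`
as `u` times a unit. Hence `f(α + u)^i = 0` exactly when `i ≥ m`, so `x ↦ α + u` has kernel
`(f^m)` on `k[x]`, and the induced injection `k[x]/(f^m) → S` is bijective because both sides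
have `k`-dimension `m * deg f`.
-/

open Polynomial Module

theorem RingHom.ker_eq_span_pow_of_pow_eq_zero_iff {R S F : Type*} [CommRing R] [IsDomain R]
    [IsPrincipalIdealRing R] [Semiring S] [FunLike F R S] [RingHomClass F R S] {φ : F} {p : R}
    (hp : Prime p) {m : ℕ} (h : ∀ i, φ p ^ i = 0 ↔ m ≤ i) :
    RingHom.ker φ = Ideal.span {p ^ m} := by
  obtain ⟨g, hg⟩ := (IsPrincipalIdealRing.principal (RingHom.ker φ)).principal
  rw [Ideal.submodule_span_eq] at hg
  have pow_mem_ker (i : ℕ) : p ^ i ∈ RingHom.ker φ ↔ m ≤ i := by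
    rw [RingHom.mem_ker, map_pow, h]
  obtain ⟨i, him, hgi⟩ : ∃ i ≤ m, Associated g (p ^ i) := by
    rw [← dvd_prime_pow hp, ← Ideal.mem_span_singleton, ← hg, pow_mem_ker]
  obtain rfl : i = m := by
    refine le_antisymm him ((pow_mem_ker i).mp ?_)
    rw [hg, Ideal.mem_span_singleton]
    exact hgi.dvd
  rwa [hg, Ideal.span_singleton_eq_span_singleton]

theorem Ideal.Quotient.mk_X_pow_eq_zero_iff {R : Type*} [CommRing R] [Nontrivial R] {m i : ℕ} :
    Ideal.Quotient.mk (Ideal.span {(X : R[X]) ^ m}) X ^ i = 0 ↔ m ≤ i := by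
  rw [← map_pow, Ideal.Quotient.eq_zero_iff_mem, Ideal.mem_span_singleton, X_pow_dvd_iff]
  simp only [coeff_X_pow]
  exact ⟨fun h => not_lt.mp fun hi => by simpa using h i hi, fun h d hd => if_neg (by omega)⟩

theorem Polynomial.Separable.exists_isUnit_aeval_add_eq_mul {R K S : Type*} [CommRing R]
    [Field K] [CommRing S] [Algebra R K] [Algebra R S] [Algebra K S] [IsScalarTower R K S]
    {F : R[X]} (hF : F.Separable) {α : K} (hα : aeval α F = 0) {u : S} (hu : IsNilpotent u) :
    ∃ G : S, IsUnit G ∧ aeval (algebraMap K S α + u) F = u * G := by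
  obtain ⟨c, hc⟩ := (F.map (algebraMap R S)).binomExpansion (algebraMap K S α) u
  have hunit : IsUnit (aeval (algebraMap K S α) (derivative F)) := by
    rw [aeval_algebraMap_apply]
    exact (isUnit_iff_ne_zero.mpr (hF.aeval_derivative_ne_zero hα)).map _
  refine ⟨aeval (algebraMap K S α) (derivative F) + c * u,
    ((Commute.all c u).isNilpotent_mul_left hu).isUnit_add_left_of_commute hunit
      (Commute.all _ _), ?_⟩
  rw [← eval_map_algebraMap, hc, derivative_map, eval_map_algebraMap, eval_map_algebraMap,
    aeval_algebraMap_apply, hα, map_zero]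
  ring

theorem Polynomial.exists_injective_algHom_of_pow_aeval_eq_zero_iff {k S : Type*} [Field k]
    [CommRing S] [Algebra k S] {f : k[X]} (hf : Irreducible f) {m : ℕ} {t : S}
    (ht : ∀ i, aeval t f ^ i = 0 ↔ m ≤ i) :
    ∃ φ : k[X] ⧸ Ideal.span {f ^ m} →ₐ[k] S, Function.Injective φ := by
  let ev : k[X] →ₐ[k] S := aeval t
  have hker : RingHom.ker ev = Ideal.span {f ^ m} :=
    RingHom.ker_eq_span_pow_of_pow_eq_zero_iff hf.prime ht
  exact ⟨(Ideal.kerLiftAlg ev).comp (Ideal.quotientEquivAlgOfEq k hker.symm).toAlgHom,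
    (Ideal.kerLiftAlg_injective ev).comp (AlgEquiv.injective _)⟩

theorem Polynomial.nonempty_algEquiv_of_pow_aeval_eq_zero_iff {k S : Type*} [Field k]
    [CommRing S] [Algebra k S] [FiniteDimensional k S] {f : k[X]} (hf : Irreducible f) {m : ℕ}
    {t : S} (ht : ∀ i, aeval t f ^ i = 0 ↔ m ≤ i) (hdim : finrank k S = m * f.natDegree) :
    Nonempty ((k[X] ⧸ Ideal.span {f ^ m}) ≃ₐ[k] S) := by
  obtain ⟨φ, hφ⟩ := exists_injective_algHom_of_pow_aeval_eq_zero_iff hf ht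
  have : FiniteDimensional k (k[X] ⧸ Ideal.span {f ^ m}) := .of_injective φ.toLinearMap hφ
  have hdim' : finrank k (k[X] ⧸ Ideal.span {f ^ m}) = finrank k S := by
    rw [finrank_quotient_span_eq_natDegree, natDegree_pow, hdim]
  exact ⟨.ofBijective φ ⟨hφ,
    (LinearMap.injective_iff_surjective_of_finrank_eq_finrank hdim' (f := φ.toLinearMap)).mp hφ⟩⟩

theorem hensel_truncated_iso_general (k : Type) [Field k] [PerfectField k]
    (f : Polynomial k) (hirr : Irreducible f)
    (m : ℕ) :
    Nonempty ((Polynomial k ⧸ Ideal.span {f ^ m}) ≃+*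
      (Polynomial (AdjoinRoot f) ⧸
        Ideal.span {(Polynomial.X : Polynomial (AdjoinRoot f)) ^ m})) := by
  have := Fact.mk hirr
  let K := AdjoinRoot f
  let S := K[X] ⧸ Ideal.span {(X : K[X]) ^ m}
  let u : S := Ideal.Quotient.mk _ X
  have hu : IsNilpotent u := ⟨m, Ideal.Quotient.mk_X_pow_eq_zero_iff.mpr le_rfl⟩
  obtain ⟨G, hG, hfG⟩ := (PerfectField.separable_of_irreducible hirr).exists_isUnit_aeval_add_eq_mul
    (AdjoinRoot.aeval_eq f ▸ AdjoinRoot.mk_self) hu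
  have ht (i : ℕ) : aeval (algebraMap K S (AdjoinRoot.root f) + u) f ^ i = 0 ↔ m ≤ i := by
    rw [hfG, mul_pow, (hG.pow i).mul_left_eq_zero, Ideal.Quotient.mk_X_pow_eq_zero_iff]
  have : FiniteDimensional k K := (AdjoinRoot.powerBasis hirr.ne_zero).finite
  have : FiniteDimensional K S := (monic_X_pow m).finite_adjoinRoot
  have : FiniteDimensional k S := Module.Finite.trans K S
  have hdim : finrank k S = m * f.natDegree := by
    have hK : finrank k K = f.natDegree := finrank_quotient_span_eq_natDegree
    have hS : finrank K S = m := finrank_quotient_span_eq_natDegree.trans (natDegree_X_pow m)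
    rw [← finrank_mul_finrank k K S, hK, hS, mul_comm]
  exact (nonempty_algEquiv_of_pow_aeval_eq_zero_iff hirr ht hdim).map AlgEquiv.toRingEquiv

theorem hensel_truncated_iso (k : Type) [Field k] [PerfectField k]
    (f : Polynomial k) (hmonic : f.Monic) (hirr : Irreducible f)
    (m : ℕ) (hm : 1 ≤ m) :
    Nonempty ((Polynomial k ⧸ Ideal.span {f ^ m}) ≃+*
      (Polynomial (AdjoinRoot f) ⧸
        Ideal.span {(Polynomial.X : Polynomial (AdjoinRoot f)) ^ m})) :=
  hensel_truncated_iso_general k f hirr m
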